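/- Suppose every connected component of the seat graph G has at most two vertices, and let k = |E(G)|. Then the maximum social welfare max_π sw(π) over all arrangements π equals the maximum, over all sets M consisting of k pairwise disjoint unordered pairs of agents, of Σ_{{p,q} ∈ M} (f_p(q) + f_q(p)). -/
import Mathlib


open scoped Classical

noncomputable section

namespace SeatArrangement

variable {P V : Type*}

/-- The utility of agent `p` under arrangement `π`:
the sum, over the seat-graph neighbors `v` of `π p`, of `p`'s preference for the agent seated
at `v`. -/
def utility [Fintype V] (G : SimpleGraph V) (f : P → P → ℝ) (π : P ≃ V) (p : P) : ℝ :=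
  ∑ v : V, if G.Adj (π p) v then f p (π.symm v) else 0

/-- The social welfare of an arrangement: the sum of the utilities of all agents. -/
def sw [Fintype P] [Fintype V] (G : SimpleGraph V) (f : P → P → ℝ) (π : P ≃ V) : ℝ :=
  ∑ p : P, utility G f π p

/-- The `(p,q)`-swap arrangement of `π`. -/
def swapArr (π : P ≃ V) (p q : P) : P ≃ V := (Equiv.swap p q).trans π

/-- `{p, q}` is a blocking pair for `π`: both agents strictly improve by swapping seats. -/
def blocking [Fintype V] (G : SimpleGraph V) (f : P → P → ℝ) (π : P ≃ V) (p q : P) : Prop :=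
  p ≠ q ∧ utility G f π p < utility G f (swapArr π p q) p
        ∧ utility G f π q < utility G f (swapArr π p q) q

/-- An arrangement is stable if it has no blocking pair. -/
def stable [Fintype V] (G : SimpleGraph V) (f : P → P → ℝ) (π : P ≃ V) : Prop :=
  ∀ p q : P, ¬ blocking G f π p q

/-- An arrangement is envy-free if no agent would strictly improve by taking
another agent's seat (via a swap). -/
def envyFree [Fintype V] (G : SimpleGraph V) (f : P → P → ℝ) (π : P ≃ V) : Prop :=
  ∀ p q : P, p ≠ q → utility G f (swapArr π p q) p ≤ utility G f π p

/-- The least utility of an agent under `π` (for a finite nonempty set of agents, the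
infimum of the range of utilities is the minimum utility). -/
def minUtil [Fintype V] (G : SimpleGraph V) (f : P → P → ℝ) (π : P ≃ V) : ℝ :=
  sInf (Set.range (utility G f π))

/-- A maximin arrangement maximizes the least utility of an agent. -/
def maximin [Fintype V] (G : SimpleGraph V) (f : P → P → ℝ) (πf : P ≃ V) : Prop :=
  ∀ π : P ≃ V, minUtil G f π ≤ minUtil G f πf

/-- A maximum arrangement maximizes the social welfare. -/
def maximum [Fintype P] [Fintype V] (G : SimpleGraph V) (f : P → P → ℝ) (πm : P ≃ V) : Prop :=
  ∀ π : P ≃ V, sw G f π ≤ sw G f πm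

end SeatArrangement

open SeatArrangement


theorem sym2_map_fix {α : Type*} (τ : α → α) (e : Sym2 α) (h : ∀ x ∈ e, τ x = x) :
    Sym2.map τ e = e := by
  rw [Sym2.map_congr (g := id) h, Sym2.map_id, id]

theorem perm_match {α : Type*} [Fintype α] :
    ∀ (n : ℕ) (M N : Finset (Sym2 α)), M.card = n → N.card = n →
    (∀ e ∈ M, ¬ e.IsDiag) → (∀ e ∈ N, ¬ e.IsDiag) →
    (∀ e ∈ M, ∀ e' ∈ M, e ≠ e' → ∀ p, p ∈ e → p ∉ e') →
    (∀ e ∈ N, ∀ e' ∈ N, e ≠ e' → ∀ p, p ∈ e → p ∉ e') →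
    ∃ σ : Equiv.Perm α, M.image (Sym2.map σ) = N := by
  intro n
  induction n with
  | zero =>
    intro M N hM hN _ _ _ _
    rw [Finset.card_eq_zero] at hM hN
    exact ⟨Equiv.refl α, by simp [hM, hN]⟩
  | succ n ih =>
    intro M N hM hN hMd hNd hMp hNp
    obtain ⟨e, heM⟩ : M.Nonempty := Finset.card_pos.mp (by omega)
    obtain ⟨e', heN⟩ : N.Nonempty := Finset.card_pos.mp (by omega)
    obtain ⟨a, b, rfl⟩ : ∃ a b, e = s(a,b) := Sym2.ind (fun a b => ⟨a, b, rfl⟩) e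
    obtain ⟨u, v, rfl⟩ : ∃ u v, e' = s(u,v) := Sym2.ind (fun u v => ⟨u, v, rfl⟩) e'
    have hab : a ≠ b := by simpa [Sym2.isDiag_iff_proj_eq] using hMd _ heM
    have huv : u ≠ v := by simpa [Sym2.isDiag_iff_proj_eq] using hNd _ heN
    obtain ⟨σ', hσ'⟩ := ih (M.erase s(a,b)) (N.erase s(u,v))
      (by rw [Finset.card_erase_of_mem heM, hM]; omega)
      (by rw [Finset.card_erase_of_mem heN, hN]; omega)
      (fun e he => hMd e (Finset.mem_of_mem_erase he))
      (fun e he => hNd e (Finset.mem_of_mem_erase he))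
      (fun e he e' he' => hMp e (Finset.mem_of_mem_erase he) e' (Finset.mem_of_mem_erase he'))
      (fun e he e' he' => hNp e (Finset.mem_of_mem_erase he) e' (Finset.mem_of_mem_erase he'))
    have hxy : σ' a ≠ σ' b := fun h => hab (σ'.injective h)
    have havoid : ∀ e₃ ∈ N.erase s(u,v), ∀ z ∈ e₃,
        z ≠ σ' a ∧ z ≠ σ' b ∧ z ≠ u ∧ z ≠ v := by
      intro e₃ he₃ z hz
      have he₃N := Finset.mem_of_mem_erase he₃
      have hne : e₃ ≠ s(u,v) := Finset.ne_of_mem_erase he₃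
      have hMmem : ∀ w : α, σ' w ∈ e₃ → w ∈ s(a,b) → False := by
        intro w hw hwab
        rw [← hσ'] at he₃
        obtain ⟨e₂, he₂, rfl⟩ := Finset.mem_image.mp he₃
        obtain ⟨w', hw', hww'⟩ := Sym2.mem_map.mp hw
        have hww : w' = w := σ'.injective hww'
        rw [← hww] at hwab
        have hne₂ : s(a,b) ≠ e₂ := (Finset.ne_of_mem_erase he₂).symm
        exact hMp s(a,b) heM e₂ (Finset.mem_of_mem_erase he₂) hne₂ w' hwab hw'
      have hzuv : z ∉ s(u,v) := hNp e₃ he₃N s(u,v) heN hne z hz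
      refine ⟨?_, ?_, fun h => hzuv (h ▸ Sym2.mem_mk_left u v),
        fun h => hzuv (h ▸ Sym2.mem_mk_right u v)⟩
      · intro h; exact hMmem a (h ▸ hz) (Sym2.mem_mk_left a b)
      · intro h; exact hMmem b (h ▸ hz) (Sym2.mem_mk_right a b)
    set x := σ' a with hx
    set y := σ' b with hy
    have hy'u : Equiv.swap x u y ≠ u := fun h =>
      hxy ((Equiv.swap x u).injective (h.trans (Equiv.swap_apply_left x u).symm)).symm
    set τ : Equiv.Perm α := (Equiv.swap x u).trans (Equiv.swap (Equiv.swap x u y) v) with hτ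
    have hτx : τ x = u := by
      simp only [hτ, Equiv.trans_apply, Equiv.swap_apply_left]
      exact Equiv.swap_apply_of_ne_of_ne hy'u.symm huv
    have hτy : τ y = v := by
      simp only [hτ, Equiv.trans_apply, Equiv.swap_apply_left]
    have hτfix : ∀ z, z ≠ x → z ≠ y → z ≠ u → z ≠ v → τ z = z := by
      intro z h1 h2 h3 h4
      have hzy' : z ≠ Equiv.swap x u y := by
        rw [Equiv.swap_apply_def]
        split_ifs with hc1 hc2
        · exact h3
        · exact h1
        · exact h2
      simp only [hτ, Equiv.trans_apply]
      rw [Equiv.swap_apply_of_ne_of_ne h1 h3, Equiv.swap_apply_of_ne_of_ne hzy' h4]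
    refine ⟨σ'.trans τ, ?_⟩
    have hcomp : (Sym2.map ⇑(σ'.trans τ)) = (Sym2.map ⇑τ) ∘ (Sym2.map ⇑σ') := by
      funext e
      simp [Sym2.map_map, Function.comp]
    rw [← Finset.insert_erase heM, Finset.image_insert]
    have h1 : Sym2.map ⇑(σ'.trans τ) s(a,b) = s(u,v) := by
      rw [Sym2.map_pair_eq]
      simp only [Equiv.trans_apply]
      rw [← hx, ← hy, hτx, hτy]
    have h2 : (M.erase s(a,b)).image (Sym2.map ⇑(σ'.trans τ)) = N.erase s(u,v) := by
      rw [hcomp, ← Finset.image_image, hσ']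
      rw [Finset.image_congr (g := id), Finset.image_id]
      intro e₃ he₃
      refine sym2_map_fix _ _ (fun z hz => ?_)
      obtain ⟨hz1, hz2, hz3, hz4⟩ := havoid e₃ he₃ z hz
      exact hτfix z hz1 hz2 hz3 hz4
    rw [h1, h2, Finset.insert_erase heN]


theorem sum_adj_eq_sum_darts {V : Type*} [Fintype V] (G : SimpleGraph V) (F : V → V → ℝ) :
    ∑ u : V, ∑ v : V, (if G.Adj u v then F u v else 0) = ∑ d : G.Dart, F d.fst d.snd := by
  classical
  rw [← Finset.sum_product', ← Finset.sum_filter]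
  refine (Finset.sum_bij (fun (d : G.Dart) _ => d.toProd) ?_ ?_ ?_ ?_).symm
  · intro d _; simp [d.adj]
  · intro d1 _ d2 _ h; exact SimpleGraph.Dart.toProd_injective h
  · intro p hp
    simp only [Finset.mem_filter] at hp
    exact ⟨⟨p, hp.2⟩, Finset.mem_univ _, rfl⟩
  · intro d _; rfl

theorem sum_darts_eq_sum_edges {V : Type*} [Fintype V] (G : SimpleGraph V) (F : V → V → ℝ) :
    ∑ d : G.Dart, F d.fst d.snd
      = ∑ e ∈ G.edgeFinset, Sym2.lift ⟨fun u v => F u v + F v u, fun u v => by ring⟩ e := by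
  classical
  rw [← Finset.sum_fiberwise_of_maps_to (g := SimpleGraph.Dart.edge)
    (t := G.edgeFinset) (fun d _ => by simp [SimpleGraph.mem_edgeFinset])]
  refine Finset.sum_congr rfl (fun e he => ?_)
  rw [SimpleGraph.mem_edgeFinset] at he
  obtain ⟨u, v, rfl⟩ : ∃ u v, e = s(u,v) := Sym2.ind (fun u v => ⟨u, v, rfl⟩) e
  rw [SimpleGraph.mem_edgeSet] at he
  have hd : (SimpleGraph.Dart.mk (u,v) he).edge = s(u,v) := rfl
  have hfiber : (Finset.univ.filter (fun d : G.Dart => d.edge = s(u,v)))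
      = {SimpleGraph.Dart.mk (u,v) he, (SimpleGraph.Dart.mk (u,v) he).symm} := by
    rw [← hd]
    convert SimpleGraph.Dart.edge_fiber (SimpleGraph.Dart.mk (u,v) he) using 1
  rw [hfiber, Finset.sum_pair (SimpleGraph.Dart.mk (u,v) he).symm_ne.symm]
  simp [Sym2.lift_mk]

theorem sw_eq_sum_edges {P V : Type*} [Fintype P] [Fintype V]
    (G : SimpleGraph V) (f : P → P → ℝ) (π : P ≃ V) :
    sw G f π = ∑ e ∈ G.edgeFinset,
      Sym2.lift ⟨fun p q => f p q + f q p, fun p q => by ring⟩ (Sym2.map π.symm e) := by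
  have h1 : sw G f π
      = ∑ u : V, ∑ v : V, (if G.Adj u v then f (π.symm u) (π.symm v) else 0) := by
    rw [sw]
    rw [← Equiv.sum_comp π
      (fun u => ∑ v : V, (if G.Adj u v then f (π.symm u) (π.symm v) else 0))]
    refine Finset.sum_congr rfl (fun p _ => ?_)
    simp [utility]
  rw [h1, sum_adj_eq_sum_darts, sum_darts_eq_sum_edges G (fun u v => f (π.symm u) (π.symm v))]
  refine Finset.sum_congr rfl (fun e _ => ?_)
  obtain ⟨u, v, rfl⟩ : ∃ u v, e = s(u,v) := Sym2.ind (fun u v => ⟨u, v, rfl⟩) e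
  simp [Sym2.map_pair_eq, Sym2.lift_mk]

theorem edge_disjoint {V : Type*} [Fintype V] (G : SimpleGraph V)
    (hcomp : ∀ c : G.ConnectedComponent, c.supp.ncard ≤ 2) :
    ∀ e ∈ G.edgeSet, ∀ e' ∈ G.edgeSet, e ≠ e' → ∀ x, x ∈ e → x ∉ e' := by
  intro e he e' he' hne x hxe hxe'
  have hy := Sym2.other_spec hxe
  have hz := Sym2.other_spec hxe'
  set y := Sym2.Mem.other hxe with hydef
  set z := Sym2.Mem.other hxe' with hzdef
  have hadjy : G.Adj x y := by rw [← SimpleGraph.mem_edgeSet, hy]; exact he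
  have hadjz : G.Adj x z := by rw [← SimpleGraph.mem_edgeSet, hz]; exact he'
  have hyz : y ≠ z := by
    intro h
    rw [← hy, ← hz, h] at hne
    exact hne rfl
  have hsupp : x ∈ (G.connectedComponentMk x).supp ∧
      y ∈ (G.connectedComponentMk x).supp ∧ z ∈ (G.connectedComponentMk x).supp := by
    refine ⟨rfl, ?_, ?_⟩
    · exact SimpleGraph.ConnectedComponent.sound hadjy.symm.reachable
    · exact SimpleGraph.ConnectedComponent.sound hadjz.symm.reachable
  have h3 : 2 < (G.connectedComponentMk x).supp.ncard := by
    rw [Set.two_lt_ncard (Set.toFinite _)]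
    exact ⟨x, hsupp.1, y, hsupp.2.1, z, hsupp.2.2, hadjy.ne, hadjz.ne, hyz⟩
  exact absurd (hcomp (G.connectedComponentMk x)) (by omega)

/-- if every connected component of the seat graph has at most two vertices and
`k = |E(G)|`, then the maximum social welfare over all arrangements equals the maximum, over
all sets `M` of `k` pairwise disjoint unordered pairs of agents, of
`Σ_{{p,q} ∈ M} (f p q + f q p)`. -/
theorem max_sw_eq_max_matching {P V : Type*} [Fintype P] [Fintype V]
    (G : SimpleGraph V) (f : P → P → ℝ)
    (hcomp : ∀ c : G.ConnectedComponent, c.supp.ncard ≤ 2)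
    (hne : Nonempty (P ≃ V)) :
    ∃ s : ℝ,
      IsGreatest {x : ℝ | ∃ π : P ≃ V, sw G f π = x} s ∧
      IsGreatest {x : ℝ | ∃ M : Finset (Sym2 P),
        M.card = G.edgeSet.ncard ∧
        (∀ e ∈ M, ¬ e.IsDiag) ∧
        ((M : Set (Sym2 P)).Pairwise fun e e' => ∀ p : P, p ∈ e → p ∉ e') ∧
        (∑ e ∈ M, Sym2.lift ⟨fun p q => f p q + f q p, fun p q => by ring⟩ e) = x} s := by
  classical
  set g : Sym2 P → ℝ := Sym2.lift ⟨fun p q => f p q + f q p, fun p q => by ring⟩ with hg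
  have hkk : G.edgeSet.ncard = G.edgeFinset.card := by
    simp [SimpleGraph.edgeFinset, Set.ncard_eq_toFinset_card']
  have hinj : ∀ (π : P ≃ V), Function.Injective (Sym2.map π.symm) :=
    fun π => Sym2.map.injective π.symm.injective
  have hMprop : ∀ π : P ≃ V,
      (G.edgeFinset.image (Sym2.map π.symm)).card = G.edgeSet.ncard ∧
      (∀ e ∈ G.edgeFinset.image (Sym2.map π.symm), ¬ e.IsDiag) ∧
      ((G.edgeFinset.image (Sym2.map π.symm) : Set (Sym2 P)).Pairwise
        fun e e' => ∀ p : P, p ∈ e → p ∉ e') ∧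
      (∑ e ∈ G.edgeFinset.image (Sym2.map π.symm), g e) = sw G f π := by
    intro π
    refine ⟨?_, ?_, ?_, ?_⟩
    · rw [Finset.card_image_of_injective _ (hinj π), hkk]
    · intro e he
      obtain ⟨e₀, he₀, rfl⟩ := Finset.mem_image.mp he
      rw [SimpleGraph.mem_edgeFinset] at he₀
      obtain ⟨u, v, rfl⟩ : ∃ u v, e₀ = s(u,v) := Sym2.ind (fun u v => ⟨u, v, rfl⟩) e₀
      have huv : u ≠ v := (G.mem_edgeSet.mp he₀).ne
      rw [Sym2.map_pair_eq, Sym2.mk_isDiag_iff]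
      exact fun h => huv (π.symm.injective h)
    · intro e he e' he' hne' p hpe hpe'
      obtain ⟨e₀, he₀, rfl⟩ := Finset.mem_image.mp (Finset.mem_coe.mp he)
      obtain ⟨e₁, he₁, rfl⟩ := Finset.mem_image.mp (Finset.mem_coe.mp he')
      have hne01 : e₀ ≠ e₁ := fun h => hne' (by rw [h])
      obtain ⟨w, hw, hwp⟩ := Sym2.mem_map.mp hpe
      obtain ⟨w', hw', hwp'⟩ := Sym2.mem_map.mp hpe'
      have hww : w' = w := π.symm.injective (hwp'.trans hwp.symm)
      rw [hww] at hw'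
      exact edge_disjoint G hcomp e₀ (SimpleGraph.mem_edgeFinset.mp he₀)
        e₁ (SimpleGraph.mem_edgeFinset.mp he₁) hne01 w hw hw'
    · rw [Finset.sum_image (fun x _ y _ h => hinj π h), ← sw_eq_sum_edges]
  have hreal : ∀ M : Finset (Sym2 P), M.card = G.edgeSet.ncard →
      (∀ e ∈ M, ¬ e.IsDiag) →
      ((M : Set (Sym2 P)).Pairwise fun e e' => ∀ p : P, p ∈ e → p ∉ e') →
      ∃ π : P ≃ V, sw G f π = ∑ e ∈ M, g e := by
    intro M hMc hMd hMp
    obtain ⟨π₀⟩ := hne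
    obtain ⟨hNc, hNd, hNp, hNs⟩ := hMprop π₀
    obtain ⟨σ, hσ⟩ := perm_match (G.edgeSet.ncard)
      (G.edgeFinset.image (Sym2.map π₀.symm)) M hNc hMc hNd hMd
      (fun e he e' he' hne' => hNp (Finset.mem_coe.mpr he) (Finset.mem_coe.mpr he') hne')
      (fun e he e' he' hne' => hMp (Finset.mem_coe.mpr he) (Finset.mem_coe.mpr he') hne')
    refine ⟨σ.symm.trans π₀, ?_⟩
    have hsymm : (σ.symm.trans π₀).symm = π₀.symm.trans σ := by ext x; rfl
    rw [sw_eq_sum_edges, ← hσ,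
      Finset.sum_image (fun x _ y _ h => Sym2.map.injective σ.injective h),
      Finset.sum_image (fun x _ y _ h => hinj π₀ h)]
    refine Finset.sum_congr rfl (fun e _ => ?_)
    rw [hsymm]
    rw [Sym2.map_map]
    rfl
  obtain ⟨πm, -, hm⟩ := Set.exists_max_image (Set.univ : Set (P ≃ V)) (sw G f)
    Set.finite_univ ⟨hne.some, trivial⟩
  obtain ⟨hc, hd, hp, hs⟩ := hMprop πm
  refine ⟨sw G f πm, ⟨⟨πm, rfl⟩, ?_⟩, ⟨G.edgeFinset.image (Sym2.map πm.symm), hc, hd, hp, hs⟩,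
    ?_⟩
  · rintro x ⟨π, rfl⟩
    exact hm π trivial
  · rintro x ⟨M, h1, h2, h3, rfl⟩
    obtain ⟨π, hπ⟩ := hreal M h1 h2 h3
    rw [← hπ]
    exact hm π trivial
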